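/- Suppose a differentiable map 𝒯 satisfies (∂𝒯/∂x)(x) f(x) = A𝒯(x) + Bh(x) with A Hurwitz, and let x(t), x̂'s transformed trajectories z(t) = 𝒯(x(t)) and an observer ẑ̇ = Aẑ + B h(x(t)) be given. Then ẑ(t) - z(t) = exp(tA)(ẑ(0) - z(0)), and hence ‖ẑ(t) - z(t)‖ → 0 exponentially as t → ∞. -/

import Mathlib

open Matrix NormedSpace

noncomputable def euCLM {nz : ℕ} : Matrix (Fin nz) (Fin nz) ℝ →ₗ[ℝ]
    (EuclideanSpace ℝ (Fin nz) →L[ℝ] EuclideanSpace ℝ (Fin nz)) where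
  toFun := Matrix.toEuclideanCLM (𝕜 := ℝ)
  map_add' := by simp
  map_smul' c M := map_smul (Matrix.toEuclideanCLM (𝕜 := ℝ)) c M

set_option maxHeartbeats 1000000 in
lemma euCLM_exp {nz : ℕ} (M : Matrix (Fin nz) (Fin nz) ℝ) :
    Matrix.toEuclideanCLM (𝕜 := ℝ) (exp M) = exp (Matrix.toEuclideanCLM (𝕜 := ℝ) M) := by
  letI := Matrix.instL2OpMetricSpace (𝕜 := ℝ) (m := Fin nz) (n := Fin nz)
  letI := Matrix.instL2OpNormedAddCommGroup (𝕜 := ℝ) (m := Fin nz) (n := Fin nz)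
  letI := Matrix.instL2OpNormedRing (𝕜 := ℝ) (n := Fin nz)
  letI := Matrix.instL2OpNormedAlgebra (𝕜 := ℝ) (n := Fin nz)
  letI : NormedAlgebra ℚ (Matrix (Fin nz) (Fin nz) ℝ) := .restrictScalars ℚ ℝ _
  exact map_exp (Matrix.toEuclideanCLM (𝕜 := ℝ))
    (LinearMap.continuous_of_finiteDimensional euCLM) M

set_option maxHeartbeats 1000000 in
set_option synthInstance.maxHeartbeats 400000 in
lemma linear_ode_sol {E : Type*} [NormedAddCommGroup E] [NormedSpace ℝ E] [CompleteSpace E]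
    (L : E →L[ℝ] E) (e : ℝ → E) (he : ∀ t, HasDerivAt e (L (e t)) t) (t : ℝ) :
    e t = exp (t • L) (e 0) := by
  have hΦ : ∀ s : ℝ, HasDerivAt (fun u : ℝ => exp ((-u) • L))
      (-(exp ((-s) • L) * L)) s := by
    intro s
    have h1 := hasDerivAt_exp_smul_const (𝕂 := ℝ) L (-s)
    have h2 : HasDerivAt (fun u : ℝ => -u) (-1) s := (hasDerivAt_id s).neg
    have h3 := h1.scomp s h2
    simpa [Function.comp_def] using h3
  set g := fun s : ℝ => exp ((-s) • L) (e s) with hgdef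
  have hg : ∀ s, HasDerivAt g 0 s := by
    intro s
    have h3 := (hΦ s).clm_apply (he s)
    convert h3 using 1
    simp [ContinuousLinearMap.mul_apply]
  have hconst : g t = g 0 :=
    is_const_of_deriv_eq_zero (fun s => (hg s).differentiableAt)
      (fun s => (hg s).deriv) t 0
  have hcomm : Commute (t • L) ((-t) • L) := ((Commute.refl L).smul_left t).smul_right (-t)
  have hkey : exp (t • L) (g t) = e t := by
    rw [hgdef]
    simp only [← ContinuousLinearMap.mul_apply (exp (t • L))]
    letI : NormedAlgebra ℚ (E →L[ℝ] E) := .restrictScalars ℚ ℝ _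
    rw [← NormedSpace.exp_add_of_commute hcomm]
    simp
  rw [hconst] at hkey
  rw [← hkey, hgdef]
  simp

set_option maxHeartbeats 1000000 in
set_option synthInstance.maxHeartbeats 400000 in
theorem part1 {nx ny nz : ℕ}
    (f : EuclideanSpace ℝ (Fin nx) → EuclideanSpace ℝ (Fin nx))
    (h : EuclideanSpace ℝ (Fin nx) → EuclideanSpace ℝ (Fin ny))
    (A : Matrix (Fin nz) (Fin nz) ℝ) (B : Matrix (Fin nz) (Fin ny) ℝ)
    (T : EuclideanSpace ℝ (Fin nx) → EuclideanSpace ℝ (Fin nz))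
    (hT : Differentiable ℝ T)
    (hPDE : ∀ x, fderiv ℝ T x (f x) =
      (show EuclideanSpace ℝ (Fin nz) from WithLp.toLp 2 (A.mulVec (T x)))
        + (show EuclideanSpace ℝ (Fin nz) from WithLp.toLp 2 (B.mulVec (h x))))
    (x : ℝ → EuclideanSpace ℝ (Fin nx))
    (hx : ∀ t, HasDerivAt x (f (x t)) t)
    (z zhat : ℝ → EuclideanSpace ℝ (Fin nz))
    (hz : ∀ t, z t = T (x t))
    (hzhat : ∀ t, HasDerivAt zhat
      ((show EuclideanSpace ℝ (Fin nz) from WithLp.toLp 2 (A.mulVec (zhat t)))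
        + (show EuclideanSpace ℝ (Fin nz) from WithLp.toLp 2 (B.mulVec (h (x t))))) t) :
    ∀ t : ℝ, zhat t - z t =
      (show EuclideanSpace ℝ (Fin nz) from WithLp.toLp 2 ((NormedSpace.exp (t • A)).mulVec (zhat 0 - z 0))) := by
  set L := Matrix.toEuclideanCLM (𝕜 := ℝ) A with hL
  have hLapp : ∀ v : EuclideanSpace ℝ (Fin nz), L v =
      (show EuclideanSpace ℝ (Fin nz) from WithLp.toLp 2 (A.mulVec v)) := fun _ => rfl
  have hzd : ∀ t, HasDerivAt z
      ((show EuclideanSpace ℝ (Fin nz) from WithLp.toLp 2 (A.mulVec (z t)))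
        + (show EuclideanSpace ℝ (Fin nz) from WithLp.toLp 2 (B.mulVec (h (x t))))) t := by
    intro t
    have hc : HasDerivAt (fun s => T (x s)) (fderiv ℝ T (x t) (f (x t))) t :=
      (hT.differentiableAt.hasFDerivAt).comp_hasDerivAt t (hx t)
    have heq : z = fun s => T (x s) := funext hz
    rw [← heq] at hc
    rw [hPDE (x t), ← hz t] at hc
    exact hc
  set e := fun t => zhat t - z t with he
  have hed : ∀ t, HasDerivAt e (L (e t)) t := by
    intro t
    have hder := (hzhat t).sub (hzd t)
    convert hder using 1
    iterate 4 rfl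
    rw [hLapp]
    rw [show WithLp.toLp 2 (A.mulVec (e t)) = (show EuclideanSpace ℝ (Fin nz) from WithLp.toLp 2 (A.mulVec (zhat t)))
        - (show EuclideanSpace ℝ (Fin nz) from WithLp.toLp 2 (A.mulVec (z t))) by
      rw [← WithLp.toLp_sub, ← Matrix.mulVec_sub]; rfl]
    abel_nf
  intro t
  have hsol := linear_ode_sol L e hed t
  have hexp : exp (t • L) = Matrix.toEuclideanCLM (𝕜 := ℝ) (exp (t • A)) := by
    rw [euCLM_exp, _root_.map_smul]
  show e t = _
  rw [hsol, hexp]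
  rfl

lemma norm_pow_bounded {𝔸 : Type*} [NormedRing 𝔸] [NormedAlgebra ℂ 𝔸] [CompleteSpace 𝔸]
    (x : 𝔸) (hspec : spectralRadius ℂ x < 1) :
    ∃ C > 0, ∀ k : ℕ, ‖x ^ k‖ ≤ C := by
  have hG := spectrum.pow_nnnorm_pow_one_div_tendsto_nhds_spectralRadius x
  have hev : ∀ᶠ k : ℕ in Filter.atTop,
      (‖x ^ k‖₊ : ENNReal) ^ (1 / (k : ℝ)) < 1 :=
    hG.eventually_lt_const hspec
  obtain ⟨N, hN⟩ := hev.exists_forall_of_atTop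
  set M := max N 1 with hM
  have hbig : ∀ k : ℕ, M ≤ k → ‖x ^ k‖ ≤ 1 := by
    intro k hk
    have hk1 : 1 ≤ k := le_trans (le_max_right N 1) hk
    have h1 := hN k (le_trans (le_max_left N 1) hk)
    have hkne : (k : ℝ) ≠ 0 := by positivity
    have h2 : ((‖x ^ k‖₊ : ENNReal) ^ (1 / (k : ℝ))) ^ (k : ℝ) ≤ 1 := by
      calc ((‖x ^ k‖₊ : ENNReal) ^ (1 / (k : ℝ))) ^ (k : ℝ)
          ≤ (1 : ENNReal) ^ (k : ℝ) := by
            exact ENNReal.rpow_le_rpow h1.le (by positivity)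
        _ = 1 := ENNReal.one_rpow _
    rw [← ENNReal.rpow_mul, one_div, inv_mul_cancel₀ hkne, ENNReal.rpow_one] at h2
    have : ‖x ^ k‖₊ ≤ 1 := by exact_mod_cast h2
    exact_mod_cast this
  refine ⟨1 + ∑ j ∈ Finset.range M, ‖x ^ j‖, by positivity, fun k => ?_⟩
  rcases lt_or_ge k M with hk | hk
  · have h1 : ‖x ^ k‖ ≤ ∑ j ∈ Finset.range M, ‖x ^ j‖ :=
      Finset.single_le_sum (f := fun j => ‖x ^ j‖) (fun j _ => norm_nonneg _)
        (Finset.mem_range.mpr hk)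
    linarith
  · have := hbig k hk
    have h0 : (0:ℝ) ≤ ∑ j ∈ Finset.range M, ‖x ^ j‖ :=
      Finset.sum_nonneg fun j _ => norm_nonneg _
    linarith

set_option maxHeartbeats 1000000 in
lemma exp_mulVec_eig {n : ℕ} (M : Matrix (Fin n) (Fin n) ℂ) (ν : ℂ) (w : Fin n → ℂ)
    (hw : M.mulVec w = ν • w) : (exp M).mulVec w = Complex.exp ν • w := by
  letI := Matrix.instL2OpMetricSpace (𝕜 := ℂ) (m := Fin n) (n := Fin n)
  letI := Matrix.instL2OpNormedAddCommGroup (𝕜 := ℂ) (m := Fin n) (n := Fin n)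
  letI := Matrix.instL2OpNormedRing (𝕜 := ℂ) (n := Fin n)
  letI := Matrix.instL2OpNormedAlgebra (𝕜 := ℂ) (n := Fin n)
  letI : NormedAlgebra ℚ (Matrix (Fin n) (Fin n) ℂ) := .restrictScalars ℚ ℂ _
  -- powers act on the eigenvector
  have hpow : ∀ k : ℕ, (M ^ k).mulVec w = ν ^ k • w := by
    intro k
    induction k with
    | zero => simp [Matrix.one_mulVec]
    | succ k ih =>
      rw [pow_succ, ← Matrix.mulVec_mulVec, hw, Matrix.mulVec_smul, ih, smul_smul, pow_succ]
      ring_nf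
  -- the continuous linear map "mulVec at w"
  let φ : Matrix (Fin n) (Fin n) ℂ →ₗ[ℂ] (Fin n → ℂ) :=
    { toFun := fun N => N.mulVec w
      map_add' := fun N₁ N₂ => Matrix.add_mulVec N₁ N₂ w
      map_smul' := fun c N => Matrix.smul_mulVec c N w }
  have hφc : Continuous φ := LinearMap.continuous_of_finiteDimensional φ
  have hsum : HasSum (fun k : ℕ => (k.factorial⁻¹ : ℂ) • M ^ k) (exp M) :=
    expSeries_hasSum_exp_of_mem_ball' (𝕂 := ℂ) M ((expSeries_radius_eq_top ℂ (Matrix (Fin n) (Fin n) ℂ)).symm ▸ edist_lt_top _ _)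
  have hsum2 : HasSum (fun k : ℕ => (k.factorial⁻¹ : ℂ) • (ν ^ k • w))
      ((exp M).mulVec w) := by
    have := hsum.mapL ⟨φ, hφc⟩
    simpa [φ, hpow] using this
  have hsc : HasSum (fun k : ℕ => (k.factorial⁻¹ : ℂ) * ν ^ k) (exp ν) :=
    expSeries_hasSum_exp_of_mem_ball' (𝕂 := ℂ) ν ((expSeries_radius_eq_top ℂ ℂ).symm ▸ edist_lt_top _ _)
  have hsum3 : HasSum (fun k : ℕ => ((k.factorial⁻¹ : ℂ) * ν ^ k) • w)
      (exp ν • w) := hsc.smul_const w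
  have : (exp M).mulVec w = exp ν • w := by
    refine hsum2.unique ?_
    simpa [smul_smul] using hsum3
  rw [this, Complex.exp_eq_exp_ℂ]

set_option maxHeartbeats 1000000 in
lemma matrix_spectrum_toLin' {n : ℕ} (N : Matrix (Fin n) (Fin n) ℂ) (μ : ℂ) :
    μ ∈ spectrum ℂ N ↔ Module.End.HasEigenvalue (Matrix.toLin' N) μ := by
  rw [← AlgEquiv.spectrum_eq (Matrix.toLinAlgEquiv (Pi.basisFun ℂ (Fin n))),
    ← Module.End.hasEigenvalue_iff_mem_spectrum]
  rfl

set_option maxHeartbeats 1000000 in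
lemma spectrum_exp_subset {n : ℕ} (M : Matrix (Fin n) (Fin n) ℂ) (μ : ℂ)
    (hμ : μ ∈ spectrum ℂ (exp M)) : ∃ ν ∈ spectrum ℂ M, μ = Complex.exp ν := by
  rw [matrix_spectrum_toLin'] at hμ
  set G := Matrix.toLin' (exp M) with hG
  set F := Matrix.toLin' M with hF
  -- the eigenspace of G for μ
  set V := Module.End.eigenspace G μ with hV
  haveI hVnt : Nontrivial V := Submodule.nontrivial_iff_ne_bot.mpr hμ
  -- F commutes with G, so V is F-invariant
  have hcomm : M * exp M = exp M * M := by
    letI := Matrix.instL2OpMetricSpace (𝕜 := ℂ) (m := Fin n) (n := Fin n)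
    letI := Matrix.instL2OpNormedAddCommGroup (𝕜 := ℂ) (m := Fin n) (n := Fin n)
    letI := Matrix.instL2OpNormedRing (𝕜 := ℂ) (n := Fin n)
    letI := Matrix.instL2OpNormedAlgebra (𝕜 := ℂ) (n := Fin n)
    exact ((Commute.refl M).exp_right).eq
  have hinv : ∀ v ∈ V, F v ∈ V := by
    intro v hv
    rw [hV, Module.End.mem_eigenspace_iff] at hv ⊢
    have : G (F v) = F (G v) := by
      rw [hG, hF]
      have h1 : Matrix.toLin' (exp M) ∘ₗ Matrix.toLin' M = Matrix.toLin' (exp M * M) :=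
        (Matrix.toLin'_mul _ _).symm
      have h2 : Matrix.toLin' M ∘ₗ Matrix.toLin' (exp M) = Matrix.toLin' (M * exp M) :=
        (Matrix.toLin'_mul _ _).symm
      calc Matrix.toLin' (exp M) (Matrix.toLin' M v)
          = (Matrix.toLin' (exp M) ∘ₗ Matrix.toLin' M) v := rfl
        _ = Matrix.toLin' (exp M * M) v := by rw [h1]
        _ = Matrix.toLin' (M * exp M) v := by rw [hcomm]
        _ = (Matrix.toLin' M ∘ₗ Matrix.toLin' (exp M)) v := by rw [h2]
        _ = Matrix.toLin' M (Matrix.toLin' (exp M) v) := rfl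
    rw [this, hv, _root_.map_smul]
  -- restrict F to V and find an eigenvalue there
  set F' : V →ₗ[ℂ] V := LinearMap.restrict F hinv with hF'
  obtain ⟨ν, hν⟩ := Module.End.exists_eigenvalue F'
  obtain ⟨w, hw⟩ := hν.exists_hasEigenvector
  have hw0 : (w : Fin n → ℂ) ≠ 0 := by
    simpa [Submodule.coe_eq_zero] using hw.right
  have hFw : F (w : Fin n → ℂ) = ν • (w : Fin n → ℂ) := by
    have := hw.apply_eq_smul
    have h2 := congrArg (Subtype.val) this
    simpa [hF', LinearMap.restrict_coe_apply] using h2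
  have hMw : M.mulVec w = ν • (w : Fin n → ℂ) := by
    rw [← Matrix.toLin'_apply, ← hF]; exact hFw
  refine ⟨ν, ?_, ?_⟩
  · rw [matrix_spectrum_toLin']
    exact Module.End.hasEigenvalue_of_hasEigenvector
      ⟨Module.End.mem_eigenspace_iff.mpr hFw, hw0⟩
  · -- w is an eigenvector of exp M with eigenvalue μ and also with exp ν
    have hGw : (exp M).mulVec w = μ • (w : Fin n → ℂ) := by
      rw [← Matrix.toLin'_apply, ← hG]
      exact Module.End.mem_eigenspace_iff.mp w.2
    have hEw : (exp M).mulVec w = Complex.exp ν • (w : Fin n → ℂ) :=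
      exp_mulVec_eig M ν w hMw
    have : (μ - Complex.exp ν) • (w : Fin n → ℂ) = 0 := by
      rw [sub_smul, ← hGw, ← hEw, sub_self]
    rcases smul_eq_zero.mp this with h | h
    · exact (sub_eq_zero.mp h).symm ▸ rfl
    · exact absurd h hw0

section Decay
open scoped Matrix.Norms.L2Operator

set_option maxHeartbeats 2000000 in
set_option synthInstance.maxHeartbeats 400000 in
lemma exp_decay {n : ℕ} (Ac : Matrix (Fin n) (Fin n) ℂ)
    (hA : ∀ μ ∈ spectrum ℂ Ac, μ.re < 0) :
    ∃ a > 0, ∃ c > 0, ∀ t : ℝ, 0 ≤ t → ‖exp (t • Ac)‖ ≤ a * Real.exp (-c * t) := by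
  letI : NormedAlgebra ℚ (Matrix (Fin n) (Fin n) ℂ) := .restrictScalars ℚ ℂ _
  rcases Nat.eq_zero_or_pos n with hn | hn
  · subst hn
    refine ⟨1, one_pos, 1, one_pos, fun t ht => ?_⟩
    haveI : Subsingleton (Matrix (Fin 0) (Fin 0) ℂ) :=
      ⟨fun a b => by ext i; exact absurd i.2 (Nat.not_lt_zero _)⟩
    rw [Subsingleton.elim (exp (t • Ac)) 0, norm_zero]
    positivity
  · haveI : NeZero n := ⟨hn.ne'⟩
    -- choose c from the spectral abscissa
    have hKc : IsCompact (spectrum ℂ Ac) := spectrum.isCompact Ac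
    have hKne : (spectrum ℂ Ac).Nonempty := spectrum.nonempty Ac
    obtain ⟨μ₀, hμ₀K, hmax⟩ := hKc.exists_isMaxOn hKne Complex.continuous_re.continuousOn
    set c : ℝ := -μ₀.re / 2 with hc
    have hc0 : 0 < c := by
      have := hA μ₀ hμ₀K
      simp only [hc]
      linarith
    have hre : ∀ μ ∈ spectrum ℂ Ac, μ.re ≤ -(2*c) := by
      intro μ hμ
      have := hmax hμ
      simp only [hc] at this ⊢
      simp only [Set.mem_setOf_eq] at this
      linarith [this]
    -- the shifted matrix
    set Sc : Matrix (Fin n) (Fin n) ℂ := Ac + (c : ℂ) • 1 with hSc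
    have hSspec : ∀ ν ∈ spectrum ℂ Sc, ν.re ≤ -c := by
      intro ν hν
      have hmem : ν - c ∈ spectrum ℂ Ac := by
        rw [spectrum.mem_iff] at hν ⊢
        have heq : (algebraMap ℂ (Matrix (Fin n) (Fin n) ℂ)) (ν - ↑c) - Ac
            = (algebraMap ℂ (Matrix (Fin n) (Fin n) ℂ)) ν - Sc := by
          rw [map_sub, hSc, Algebra.algebraMap_eq_smul_one (c : ℂ), sub_sub, add_comm]
        rw [heq]
        exact hν
      have := hre _ hmem
      simp only [Complex.sub_re, Complex.ofReal_re] at this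
      linarith
    -- spectral radius of exp Sc is < 1
    have hrad : spectralRadius ℂ (exp Sc) < 1 := by
      have hle : spectralRadius ℂ (exp Sc) ≤ ENNReal.ofReal (Real.exp (-c)) := by
        rw [spectralRadius]
        refine iSup₂_le fun μ hμ => ?_
        obtain ⟨ν, hν, rfl⟩ := spectrum_exp_subset Sc μ hμ
        have h1 : ‖Complex.exp ν‖ = Real.exp ν.re := by
          rw [Complex.norm_exp]
        have h2 : Real.exp ν.re ≤ Real.exp (-c) := Real.exp_le_exp.mpr (hSspec ν hν)
        rw [← ENNReal.ofReal_coe_nnreal]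
        apply ENNReal.ofReal_le_ofReal
        rw [coe_nnnorm, h1]
        exact h2
      refine lt_of_le_of_lt hle ?_
      rw [← ENNReal.ofReal_one]
      exact ENNReal.ofReal_lt_ofReal_iff_of_nonneg (Real.exp_pos _).le |>.mpr
        (by rw [Real.exp_lt_one_iff]; linarith)
    obtain ⟨C, hC0, hCb⟩ := norm_pow_bounded (exp Sc) hrad
    -- bound on [0,1]
    have hcont : Continuous fun t : ℝ => exp (t • Sc) :=
      exp_continuous.comp (continuous_id.smul continuous_const)
    obtain ⟨C₁, hC₁⟩ := (isCompact_Icc (a := (0:ℝ)) (b := 1)).exists_bound_of_continuousOn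
      hcont.continuousOn
    have hC₁0 : 0 ≤ C₁ := le_trans (norm_nonneg _) (hC₁ 0 ⟨le_refl _, zero_le_one⟩)
    -- bound for all t ≥ 0 of ‖exp (t • Sc)‖
    have hSbound : ∀ t : ℝ, 0 ≤ t → ‖exp (t • Sc)‖ ≤ C * C₁ := by
      intro t ht
      set k : ℕ := ⌊t⌋₊ with hk
      set r : ℝ := t - k with hr
      have hr0 : 0 ≤ r := by
        have := Nat.floor_le ht
        simp only [hr]; linarith
      have hr1 : r ≤ 1 := by
        have := Nat.lt_floor_add_one t
        simp only [hr]; linarith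
      have hsplit : t • Sc = (k : ℝ) • Sc + r • Sc := by
        rw [← add_smul]
        congr 1
        simp only [hr]; ring
      have hcomm : Commute ((k : ℝ) • Sc) (r • Sc) :=
        ((Commute.refl Sc).smul_left _).smul_right _
      rw [hsplit, NormedSpace.exp_add_of_commute hcomm]
      have hek : exp ((k : ℝ) • Sc) = exp Sc ^ k := by
        rw [Nat.cast_smul_eq_nsmul ℝ k Sc, NormedSpace.exp_nsmul]
      rw [hek]
      calc ‖exp Sc ^ k * exp (r • Sc)‖
          ≤ ‖exp Sc ^ k‖ * ‖exp (r • Sc)‖ := norm_mul_le _ _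
        _ ≤ C * C₁ := by
            exact mul_le_mul (hCb k) (hC₁ r ⟨hr0, hr1⟩) (norm_nonneg _) hC0.le
    -- relate exp (t • Ac) and exp (t • Sc)
    have hshift : ∀ t : ℝ, exp (t • Ac) = Complex.exp (-(t * c)) • exp (t • Sc) := by
      intro t
      have h1 : t • Sc = t • Ac + ((t * c : ℝ) : ℂ) • (1 : Matrix (Fin n) (Fin n) ℂ) := by
        rw [hSc, smul_add]
        congr 1
        have hts : t • ((c : ℝ) : ℂ) = ((t * c : ℝ) : ℂ) := by
          rw [Complex.real_smul]; push_cast; ring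
        rw [← smul_assoc, hts]
      have hcomm : Commute (t • Ac) (((t * c : ℝ) : ℂ) • (1 : Matrix (Fin n) (Fin n) ℂ)) := by
        refine ((Commute.one_right (t • Ac)).smul_right _)
      have h2 : exp (((t * c : ℝ) : ℂ) • (1 : Matrix (Fin n) (Fin n) ℂ))
          = Complex.exp ((t * c : ℝ) : ℂ) • (1 : Matrix (Fin n) (Fin n) ℂ) := by
        rw [← Algebra.algebraMap_eq_smul_one,
          ← map_exp (algebraMap ℂ (Matrix (Fin n) (Fin n) ℂ)) (continuous_algebraMap ℂ _),
          ← Complex.exp_eq_exp_ℂ, Algebra.algebraMap_eq_smul_one]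
      have h3 : exp (t • Sc) = Complex.exp ((t * c : ℝ) : ℂ) • exp (t • Ac) := by
        rw [h1, NormedSpace.exp_add_of_commute hcomm, h2, Algebra.mul_smul_comm, mul_one]
      rw [h3, smul_smul, ← Complex.exp_add]
      norm_num
    refine ⟨C * C₁ + 1, by positivity, c, hc0, fun t ht => ?_⟩
    rw [hshift t, norm_smul]
    have habs : ‖Complex.exp (-(t * c))‖ = Real.exp (-(t * c)) := by
      rw [Complex.norm_exp]
      congr 1
      simp [Complex.mul_re]
    rw [habs]
    have : Real.exp (-(t * c)) = Real.exp (-c * t) := by ring_nf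
    rw [this]
    have hb := hSbound t ht
    calc Real.exp (-c * t) * ‖exp (t • Sc)‖
        ≤ Real.exp (-c * t) * (C * C₁) := by
          exact mul_le_mul_of_nonneg_left hb (Real.exp_pos _).le
      _ ≤ (C * C₁ + 1) * Real.exp (-c * t) := by
          rw [mul_comm]
          have := (Real.exp_pos (-c * t)).le
          nlinarith

end Decay

noncomputable def ofRealLM {n : ℕ} : Matrix (Fin n) (Fin n) ℝ →ₗ[ℝ] Matrix (Fin n) (Fin n) ℂ where
  toFun M := M.map Complex.ofReal
  map_add' M N := by ext i j; simp
  map_smul' c M := by ext i j; simp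

set_option maxHeartbeats 1000000 in
lemma map_ofReal_exp {n : ℕ} (M : Matrix (Fin n) (Fin n) ℝ) :
    (exp M).map Complex.ofReal = exp (M.map Complex.ofReal) := by
  letI := Matrix.instL2OpMetricSpace (𝕜 := ℝ) (m := Fin n) (n := Fin n)
  letI := Matrix.instL2OpNormedAddCommGroup (𝕜 := ℝ) (m := Fin n) (n := Fin n)
  letI := Matrix.instL2OpNormedRing (𝕜 := ℝ) (n := Fin n)
  letI := Matrix.instL2OpNormedAlgebra (𝕜 := ℝ) (n := Fin n)
  letI := Matrix.instL2OpMetricSpace (𝕜 := ℂ) (m := Fin n) (n := Fin n)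
  letI := Matrix.instL2OpNormedAddCommGroup (𝕜 := ℂ) (m := Fin n) (n := Fin n)
  letI := Matrix.instL2OpNormedRing (𝕜 := ℂ) (n := Fin n)
  letI := Matrix.instL2OpNormedAlgebra (𝕜 := ℂ) (n := Fin n)
  letI : NormedAlgebra ℚ (Matrix (Fin n) (Fin n) ℝ) := .restrictScalars ℚ ℝ _
  have hcont : Continuous (fun N : Matrix (Fin n) (Fin n) ℝ => N.map Complex.ofReal) :=
    LinearMap.continuous_of_finiteDimensional (ofRealLM (n := n))
  have h1 := map_exp (Complex.ofRealHom.mapMatrix (m := Fin n)) hcont M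
  have h2 : (exp : Matrix (Fin n) (Fin n) ℂ → Matrix (Fin n) (Fin n) ℂ) = exp :=
    rfl
  calc (exp M).map Complex.ofReal
      = Complex.ofRealHom.mapMatrix (exp M) := rfl
    _ = exp (Complex.ofRealHom.mapMatrix M) := h1
    _ = exp (M.map Complex.ofReal) := by rw [h2]; rfl

set_option maxHeartbeats 2000000 in
set_option synthInstance.maxHeartbeats 400000 in
theorem kkl_observer_exponential_convergence_aux {nx ny nz : ℕ}
    (f : EuclideanSpace ℝ (Fin nx) → EuclideanSpace ℝ (Fin nx))
    (h : EuclideanSpace ℝ (Fin nx) → EuclideanSpace ℝ (Fin ny))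
    (A : Matrix (Fin nz) (Fin nz) ℝ) (B : Matrix (Fin nz) (Fin ny) ℝ)
    (hHurwitz : ∀ μ ∈ spectrum ℂ (A.map (Complex.ofReal)), μ.re < 0)
    (T : EuclideanSpace ℝ (Fin nx) → EuclideanSpace ℝ (Fin nz))
    (hT : Differentiable ℝ T)
    (hPDE : ∀ x, fderiv ℝ T x (f x) =
      (show EuclideanSpace ℝ (Fin nz) from WithLp.toLp 2 (A.mulVec (T x)))
        + (show EuclideanSpace ℝ (Fin nz) from WithLp.toLp 2 (B.mulVec (h x))))
    (x : ℝ → EuclideanSpace ℝ (Fin nx))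
    (hx : ∀ t, HasDerivAt x (f (x t)) t)
    (z zhat : ℝ → EuclideanSpace ℝ (Fin nz))
    (hz : ∀ t, z t = T (x t))
    (hzhat : ∀ t, HasDerivAt zhat
      ((show EuclideanSpace ℝ (Fin nz) from WithLp.toLp 2 (A.mulVec (zhat t)))
        + (show EuclideanSpace ℝ (Fin nz) from WithLp.toLp 2 (B.mulVec (h (x t))))) t) :
    (∀ t : ℝ, zhat t - z t =
      (show EuclideanSpace ℝ (Fin nz) from WithLp.toLp 2 ((NormedSpace.exp (t • A)).mulVec (zhat 0 - z 0))))
    ∧ ∃ a > 0, ∃ c > 0, ∀ t : ℝ, 0 ≤ t → ‖zhat t - z t‖ ≤ a * Real.exp (-c * t) := by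
  have hp1 := part1 f h A B T hT hPDE x hx z zhat hz hzhat
  refine ⟨hp1, ?_⟩
  obtain ⟨a', ha', c, hc, hdec⟩ := exp_decay (A.map Complex.ofReal) hHurwitz
  set e0 : EuclideanSpace ℝ (Fin nz) := zhat 0 - z 0 with he0
  refine ⟨a' * (‖e0‖ + 1), by positivity, c, hc, fun t ht => ?_⟩
  letI := Matrix.instL2OpMetricSpace (𝕜 := ℂ) (m := Fin nz) (n := Fin nz)
  letI := Matrix.instL2OpNormedAddCommGroup (𝕜 := ℂ) (m := Fin nz) (n := Fin nz)
  letI := Matrix.instL2OpNormedRing (𝕜 := ℂ) (n := Fin nz)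
  letI := Matrix.instL2OpNormedAlgebra (𝕜 := ℂ) (n := Fin nz)
  rw [hp1 t]
  set M : Matrix (Fin nz) (Fin nz) ℝ := NormedSpace.exp (t • A) with hM
  set cv : EuclideanSpace ℂ (Fin nz) := WithLp.toLp 2 (fun i => ((e0 i : ℝ) : ℂ)) with hcv
  have hnormcv : ‖cv‖ = ‖e0‖ := by
    rw [EuclideanSpace.norm_eq, EuclideanSpace.norm_eq]
    congr 1
    refine Finset.sum_congr rfl fun i _ => ?_
    rw [hcv]
    simp
  have hmv : ((M.map Complex.ofReal) *ᵥ (cv : Fin nz → ℂ)) = fun i => (((M *ᵥ (e0 : Fin nz → ℝ)) i : ℝ) : ℂ) := by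
    funext i
    simp only [Matrix.mulVec, dotProduct, Matrix.map_apply, hcv]
    push_cast
    rfl
  have hnorm1 : ‖(show EuclideanSpace ℝ (Fin nz) from WithLp.toLp 2 (M *ᵥ (e0 : Fin nz → ℝ)))‖
      = ‖(show EuclideanSpace ℂ (Fin nz) from WithLp.toLp 2 ((M.map Complex.ofReal) *ᵥ (cv : Fin nz → ℂ)))‖ := by
    rw [show (show EuclideanSpace ℂ (Fin nz) from WithLp.toLp 2 ((M.map Complex.ofReal) *ᵥ (cv : Fin nz → ℂ)))
      = (show EuclideanSpace ℂ (Fin nz) from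
          WithLp.toLp 2 (fun i => (((M *ᵥ (e0 : Fin nz → ℝ)) i : ℝ) : ℂ))) by rw [hmv]]
    rw [EuclideanSpace.norm_eq, EuclideanSpace.norm_eq]
    congr 1
    refine Finset.sum_congr rfl fun i _ => ?_
    simp
  have hopb := Matrix.l2_opNorm_mulVec (M.map Complex.ofReal) cv
  have hexpc : M.map Complex.ofReal = NormedSpace.exp (t • A.map Complex.ofReal) := by
    rw [hM, map_ofReal_exp]
    congr 1
    ext i j
    simp
  calc ‖(show EuclideanSpace ℝ (Fin nz) from WithLp.toLp 2 (M *ᵥ (e0 : Fin nz → ℝ)))‖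
      = ‖(show EuclideanSpace ℂ (Fin nz) from WithLp.toLp 2 ((M.map Complex.ofReal) *ᵥ (cv : Fin nz → ℂ)))‖ := hnorm1
    _ ≤ ‖M.map Complex.ofReal‖ * ‖cv‖ := hopb
    _ = ‖NormedSpace.exp (t • A.map Complex.ofReal)‖ * ‖e0‖ := by rw [hexpc, hnormcv]
    _ ≤ (a' * Real.exp (-c * t)) * ‖e0‖ := by
        exact mul_le_mul_of_nonneg_right (hdec t ht) (norm_nonneg _)
    _ ≤ (a' * (‖e0‖ + 1)) * Real.exp (-c * t) := by
        have h1 := (Real.exp_pos (-c * t)).le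
        have h2 := norm_nonneg e0
        nlinarith

/-- for a KKL transformation `𝒯` satisfying the PDE with `A` Hurwitz,
the observer `ẑ' = Aẑ + B h(x(t))` satisfies `ẑ(t) - z(t) = exp(tA)(ẑ(0) - z(0))`
(where `z(t) = 𝒯(x(t))`), and `‖ẑ(t) - z(t)‖ → 0` exponentially. -/
theorem kkl_observer_exponential_convergence {nx ny nz : ℕ}
    (f : EuclideanSpace ℝ (Fin nx) → EuclideanSpace ℝ (Fin nx))
    (h : EuclideanSpace ℝ (Fin nx) → EuclideanSpace ℝ (Fin ny))
    (A : Matrix (Fin nz) (Fin nz) ℝ) (B : Matrix (Fin nz) (Fin ny) ℝ)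
    (hHurwitz : ∀ μ ∈ spectrum ℂ (A.map (Complex.ofReal)), μ.re < 0)
    (T : EuclideanSpace ℝ (Fin nx) → EuclideanSpace ℝ (Fin nz))
    (hT : Differentiable ℝ T)
    (hPDE : ∀ x, fderiv ℝ T x (f x) =
      (show EuclideanSpace ℝ (Fin nz) from WithLp.toLp 2 (A.mulVec (T x)))
        + (show EuclideanSpace ℝ (Fin nz) from WithLp.toLp 2 (B.mulVec (h x))))
    (x : ℝ → EuclideanSpace ℝ (Fin nx))
    (hx : ∀ t, HasDerivAt x (f (x t)) t)
    (z zhat : ℝ → EuclideanSpace ℝ (Fin nz))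
    (hz : ∀ t, z t = T (x t))
    (hzhat : ∀ t, HasDerivAt zhat
      ((show EuclideanSpace ℝ (Fin nz) from WithLp.toLp 2 (A.mulVec (zhat t)))
        + (show EuclideanSpace ℝ (Fin nz) from WithLp.toLp 2 (B.mulVec (h (x t))))) t) :
    (∀ t : ℝ, zhat t - z t =
      (show EuclideanSpace ℝ (Fin nz) from WithLp.toLp 2 ((NormedSpace.exp (t • A)).mulVec (zhat 0 - z 0))))
    ∧ ∃ a > 0, ∃ c > 0, ∀ t : ℝ, 0 ≤ t → ‖zhat t - z t‖ ≤ a * Real.exp (-c * t) := by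
  exact kkl_observer_exponential_convergence_aux f h A B hHurwitz T hT hPDE x hx z zhat hz hzhat
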